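/- arXiv:1211.5885 — 2 statements merged into one kernel-verified Lean document; each statement's English description precedes it below -/
import Mathlib

section
/- Let T(ω,ξ,y)=(θω, g_ω(ξ), h_{ω,ξ}(y)) be a random map on Ω×Ξ×ℝ^d as in the double skew product setting, and let K⊆Ω×Ξ×ℝ^d be a T-invariant random compact set (over base Ω). Then the family of sets K(ω,ξ)={y∈ℝ^d : (ω,ξ,y)∈K} is a random compact set over the base Ω×Ξ (i.e. (ω,ξ)↦d(y,K(ω,ξ)) is measurable for each y∈ℝ^d and each K(ω,ξ) is compact), and h_{ω,ξ}(K(ω,ξ)) = K(θω, g_ω(ξ)) for P-a.e. ω∈Ω and all ξ∈Ξ. -/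
/-!
The fibre `K(ω, ξ)` is the slice over `ξ` of the compact set `K(ω) ⊆ Ξ × ℝ^d`. For a compact
`S ⊆ X × Y`, the distance from `y` to the slice over `x` is obtained by a penalty method,
`d(y, S_x) = sup_n inf_{q ∈ S} (n d(x, q₁) + d(y, q₂))`, using compactness of `S`. Each penalty is
`(n + 1)`-Lipschitz, so its infimum over `S` equals the infimum over a countable dense set of
points `p` of `penalty(p) + (n + 1) d(p, S)`. This writes `d(y, K(ω, ξ))` through countably many
functions that are measurable in `(ω, ξ)` by hypothesis. Invariance of the fibres follows from
invariance of `K(ω)` because `g_ω` is injective.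
-/

open MeasureTheory Metric Set
open scoped ENNReal

section Penalty

variable {X Y : Type*}

noncomputable def slicePenalty [EDist X] [EDist Y] (n : ℕ) (x : X) (y : Y) (q : X × Y) : ℝ≥0∞ :=
  n * edist x q.1 + edist y q.2

variable [PseudoEMetricSpace X] [PseudoEMetricSpace Y]

theorem continuous_slicePenalty (n : ℕ) (x : X) (y : Y) : Continuous (slicePenalty n x y) :=
  ((ENNReal.continuous_const_mul (ENNReal.natCast_ne_top n)).comp
    (continuous_const.edist continuous_fst)).add (continuous_const.edist continuous_snd)

theorem slicePenalty_le_add_mul_edist (n : ℕ) (x : X) (y : Y) (q q' : X × Y) :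
    slicePenalty n x y q ≤ slicePenalty n x y q' + (n + 1) * edist q q' := by
  have h₁ : edist x q.1 ≤ edist x q'.1 + edist q q' :=
    (edist_triangle _ _ _).trans (by rw [edist_comm q]; gcongr; exact le_max_left _ _)
  have h₂ : edist y q.2 ≤ edist y q'.2 + edist q q' :=
    (edist_triangle _ _ _).trans (by rw [edist_comm q]; gcongr; exact le_max_right _ _)
  calc slicePenalty n x y q ≤ n * (edist x q'.1 + edist q q') + (edist y q'.2 + edist q q') := by
        unfold slicePenalty; gcongr
    _ = slicePenalty n x y q' + (n + 1) * edist q q' := by unfold slicePenalty; ring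

theorem slicePenalty_mono {m n : ℕ} (hmn : m ≤ n) (x : X) (y : Y) (q : X × Y) :
    slicePenalty m x y q ≤ slicePenalty n x y q := by
  unfold slicePenalty; gcongr

end Penalty

theorem biInf_eq_iInf_add_mul_infEDist {X : Type*} [PseudoEMetricSpace X] {f : X → ℝ≥0∞}
    {L : ℝ≥0∞} (hL₀ : L ≠ 0) (hL : L ≠ ∞) (hf : ∀ a b, f a ≤ f b + L * edist a b) (S : Set X) :
    ⨅ q ∈ S, f q = ⨅ p, f p + L * infEDist p S := by
  refine le_antisymm (le_iInf fun p => ?_) (le_iInf₂ fun q hq => ?_)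
  · calc ⨅ q ∈ S, f q ≤ ⨅ q ∈ S, f p + L * edist p q :=
          iInf₂_mono fun q _ => (hf q p).trans_eq (by rw [edist_comm])
      _ = f p + L * infEDist p S := by
          simp only [infEDist, ENNReal.mul_iInf_of_ne hL₀ hL, ENNReal.add_iInf]
  · exact iInf_le_of_le q (by rw [infEDist_zero_of_mem hq, mul_zero, add_zero])

theorem infEDist_slice_eq_iSup_biInf_slicePenalty {X Y : Type*} [EMetricSpace X]
    [EMetricSpace Y] {S : Set (X × Y)} (hS : IsCompact S) (x : X) (y : Y) :
    infEDist y {z | (x, z) ∈ S} = ⨆ n : ℕ, ⨅ q ∈ S, slicePenalty n x y q := by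
  refine le_antisymm ?_ (iSup_le fun n => le_infEDist.2 fun z hz => ?_)
  · set c := ⨆ n : ℕ, ⨅ q ∈ S, slicePenalty n x y q
    rcases S.eq_empty_or_nonempty with rfl | hSne
    · simp [c]
    rcases eq_top_or_lt_top c with hc | hc
    · simp [hc]
    set t : ℕ → Set (X × Y) := fun n => S ∩ {q | slicePenalty n x y q ≤ c}
    have hsub_closed : ∀ n, IsClosed {q | slicePenalty n x y q ≤ c} := fun n =>
      isClosed_le (continuous_slicePenalty n x y) continuous_const
    have ht_nonempty : ∀ n, (t n).Nonempty := fun n => by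
      obtain ⟨q, hq, hmin⟩ :=
        hS.exists_isMinOn hSne (continuous_slicePenalty n x y).continuousOn
      exact ⟨q, hq, (le_iInf₂ fun q' hq' => hmin hq').trans
        (le_iSup (fun n => ⨅ q ∈ S, slicePenalty n x y q) n)⟩
    obtain ⟨q, hq⟩ := IsCompact.nonempty_iInter_of_sequence_nonempty_isCompact_isClosed t
      (fun n q hq => ⟨hq.1, (slicePenalty_mono n.le_succ x y q).trans hq.2⟩) ht_nonempty
      (hS.inter_right (hsub_closed 0)) fun n => hS.isClosed.inter (hsub_closed n)
    simp only [mem_iInter] at hq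
    -- a penalty bounded uniformly in `n` forces `q` into the slice over `x`
    have hqx : q.1 = x := by
      by_contra hne
      obtain ⟨n, hn⟩ := ENNReal.exists_nat_mul_gt (edist_pos.2 (Ne.symm hne)).ne' hc.ne
      exact (hn.trans_le le_self_add).not_ge (hq n).2
    calc infEDist y {z | (x, z) ∈ S} ≤ edist y q.2 :=
          infEDist_le_edist_of_mem (by simpa [← hqx] using (hq 0).1)
      _ ≤ c := by simpa [slicePenalty] using (hq 0).2
  · calc ⨅ q ∈ S, slicePenalty n x y q ≤ slicePenalty n x y (x, z) := biInf_le _ hz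
      _ = edist y z := by simp [slicePenalty]

theorem infDist_slice_eq_toReal_iSup_iInf {X Y : Type*} [MetricSpace X] [MetricSpace Y]
    {S : Set (X × Y)} (hS : IsCompact S) {s : Set (X × Y)} (hs : Dense s) (x : X) (y : Y) :
    infDist y {z | (x, z) ∈ S} = (⨆ n : ℕ, ⨅ p : s,
      slicePenalty n x y p + (n + 1) * ENNReal.ofReal (infDist (p : X × Y) S)).toReal := by
  -- `ofReal ∘ infDist` rather than `infEDist`: only the real distance to `K(ω)` is assumed
  -- measurable, and it is `0`, not `∞`, when `S = ∅`
  rcases S.eq_empty_or_nonempty with rfl | hSne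
  · suffices ∀ n : ℕ, ⨅ p : s, slicePenalty n x y p = 0 by simp [this]
    intro n
    rw [hs.ciInf' (continuous_slicePenalty n x y)]
    exact nonpos_iff_eq_zero.1 (iInf_le_of_le (x, y) (by simp [slicePenalty]))
  · have hL : ∀ n : ℕ, (n + 1 : ℝ≥0∞) ≠ ∞ := fun n => by finiteness
    have hofReal : ∀ p : X × Y, ENNReal.ofReal (infDist p S) = infEDist p S := fun _ =>
      ENNReal.ofReal_toReal (infEDist_ne_top hSne)
    simp only [hofReal]
    rw [infDist, infEDist_slice_eq_iSup_biInf_slicePenalty hS]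
    congr 1
    refine iSup_congr fun n => ?_
    rw [biInf_eq_iInf_add_mul_infEDist (by positivity) (hL n)
      (slicePenalty_le_add_mul_edist n x y)]
    exact (hs.ciInf' ((continuous_slicePenalty n x y).add
      ((ENNReal.continuous_const_mul (hL n)).comp continuous_infEDist))).symm

theorem IsCompact.slice {X Y : Type*} [TopologicalSpace X] [TopologicalSpace Y] [T2Space X]
    [T2Space Y] {S : Set (X × Y)} (hS : IsCompact S) (x : X) : IsCompact {z | (x, z) ∈ S} :=
  (hS.image continuous_snd).of_isClosed_subset
    (hS.isClosed.preimage (Continuous.prodMk_right x)) fun z hz => ⟨(x, z), hz, rfl⟩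

theorem image_slice_eq_slice_of_image_eq {X Y Z : Type*} {g : X → X} (hg : g.Injective)
    {h : X → Y → Z} {S : Set (X × Y)} {S' : Set (X × Z)}
    (hSS' : (fun q : X × Y => (g q.1, h q.1 q.2)) '' S = S') (x : X) :
    h x '' {y | (x, y) ∈ S} = {z | (g x, z) ∈ S'} := by
  subst hSS'
  ext z
  constructor
  · rintro ⟨y, hy, rfl⟩
    exact ⟨(x, y), hy, rfl⟩
  · rintro ⟨⟨x', y⟩, hy, hxz⟩
    obtain ⟨hx, rfl⟩ := Prod.mk.inj hxz
    obtain rfl := hg hx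
    exact ⟨y, hy, rfl⟩

theorem stmt12_general {Ω Ξ : Type*} [MeasurableSpace Ω] [MetricSpace Ξ] [CompactSpace Ξ]
    [MeasurableSpace Ξ] [BorelSpace Ξ] {d : ℕ}
    (P : Measure Ω) (θ : Ω → Ω) (g : Ω → Ξ → Ξ)
    (hgb : ∀ ω, Function.Bijective (g ω))
    (h : Ω → Ξ → EuclideanSpace ℝ (Fin d) → EuclideanSpace ℝ (Fin d))
    (K : Set (Ω × Ξ × EuclideanSpace ℝ (Fin d)))
    (hKc : ∀ ω, IsCompact {p : Ξ × EuclideanSpace ℝ (Fin d) | (ω, p) ∈ K})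
    (hKm : ∀ p : Ξ × EuclideanSpace ℝ (Fin d),
      Measurable fun ω => infDist p {q : Ξ × EuclideanSpace ℝ (Fin d) | (ω, q) ∈ K})
    (hKinv : ∀ᵐ ω ∂P,
      (fun p : Ξ × EuclideanSpace ℝ (Fin d) => (g ω p.1, h ω p.1 p.2)) ''
        {p | (ω, p) ∈ K} = {p | (θ ω, p) ∈ K}) :
    (∀ ω ξ, IsCompact {y | (ω, ξ, y) ∈ K}) ∧
    (∀ y : EuclideanSpace ℝ (Fin d),
      Measurable fun q : Ω × Ξ => infDist y {z | (q.1, q.2, z) ∈ K}) ∧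
    ∀ᵐ ω ∂P, ∀ ξ : Ξ,
      h ω ξ '' {y | (ω, ξ, y) ∈ K} = {y | (θ ω, g ω ξ, y) ∈ K} := by
  refine ⟨fun ω ξ => (hKc ω).slice ξ, fun y => ?_, ?_⟩
  · obtain ⟨s, hs_countable, hs_dense⟩ :=
      TopologicalSpace.exists_countable_dense (Ξ × EuclideanSpace ℝ (Fin d))
    have := hs_countable.to_subtype
    have hformula : ∀ q : Ω × Ξ, infDist y {z | (q.1, q.2, z) ∈ K} = _ := fun q =>
      infDist_slice_eq_toReal_iSup_iInf (hKc q.1) hs_dense q.2 y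
    rw [funext hformula]
    refine Measurable.ennreal_toReal (Measurable.iSup fun n => Measurable.iInf fun p => ?_)
    refine Measurable.add ?_ (measurable_const.mul
      (ENNReal.measurable_ofReal.comp ((hKm p).comp measurable_fst)))
    unfold slicePenalty
    fun_prop
  · filter_upwards [hKinv] with ω hω ξ
    exact image_slice_eq_slice_of_image_eq (hgb ω).injective hω ξ

/-- If `K ⊆ Ω × Ξ × ℝ^d` is a `T`-invariant random compact set for
a double skew product `T(ω,ξ,y) = (θω, g_ω(ξ), h_{ω,ξ}(y))`, then the fibres
`K(ω,ξ) = {y : (ω,ξ,y) ∈ K}` form a random compact set over the base `Ω × Ξ`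
(each `K(ω,ξ)` is compact and `(ω,ξ) ↦ dist(y, K(ω,ξ))` is product-measurable for
each `y`), and `h_{ω,ξ}(K(ω,ξ)) = K(θω, g_ω(ξ))` for `P`-a.e. `ω` and all `ξ`. -/
theorem stmt12 {Ω Ξ : Type*} [MeasurableSpace Ω] [MetricSpace Ξ] [CompactSpace Ξ]
    [MeasurableSpace Ξ] [BorelSpace Ξ] {d : ℕ}
    (P : Measure Ω) [IsProbabilityMeasure P]
    (θ θinv : Ω → Ω) (hθm : Measurable θ) (hθim : Measurable θinv)
    (hli : Function.LeftInverse θinv θ) (hri : Function.RightInverse θinv θ)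
    (herg : Ergodic θ P)
    (g : Ω → Ξ → Ξ) (hgc : ∀ ω, Continuous (g ω))
    (hgb : ∀ ω, Function.Bijective (g ω))
    (hgm : ∀ ξ, Measurable fun ω => g ω ξ)
    (h : Ω → Ξ → EuclideanSpace ℝ (Fin d) → EuclideanSpace ℝ (Fin d))
    (hhc : ∀ ω, Continuous fun p : Ξ × EuclideanSpace ℝ (Fin d) => h ω p.1 p.2)
    (hhm : ∀ ξ y, Measurable fun ω => h ω ξ y)
    (K : Set (Ω × Ξ × EuclideanSpace ℝ (Fin d)))
    (hKc : ∀ ω, IsCompact {p : Ξ × EuclideanSpace ℝ (Fin d) | (ω, p) ∈ K})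
    (hKm : ∀ p : Ξ × EuclideanSpace ℝ (Fin d),
      Measurable fun ω => infDist p {q : Ξ × EuclideanSpace ℝ (Fin d) | (ω, q) ∈ K})
    (hKinv : ∀ᵐ ω ∂P,
      (fun p : Ξ × EuclideanSpace ℝ (Fin d) => (g ω p.1, h ω p.1 p.2)) ''
        {p | (ω, p) ∈ K} = {p | (θ ω, p) ∈ K}) :
    (∀ ω ξ, IsCompact {y | (ω, ξ, y) ∈ K}) ∧
    (∀ y : EuclideanSpace ℝ (Fin d),
      Measurable fun q : Ω × Ξ => infDist y {z | (q.1, q.2, z) ∈ K}) ∧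
    ∀ᵐ ω ∂P, ∀ ξ : Ξ,
      h ω ξ '' {y | (ω, ξ, y) ∈ K} = {y | (θ ω, g ω ξ, y) ∈ K} :=
  stmt12_general P θ g hgb h K hKc hKm hKinv
end

section
/- A random homeomorphism θ⋉g on Ω×Ξ is transitive if and only if the following condition (T1) holds: for all non-empty random open sets U,V⊆Ω×Ξ there exists n∈ℕ such that (θ⋉g)^n(U)∩V is non-empty (i.e. {ω : ((θ⋉g)^n(U)∩V)(ω)≠∅} has positive P-measure). -/
open MeasureTheory Metric

/-- Iterates of the fibre maps: `giter θ g n ω = g_{θ^{n-1}ω} ∘ ⋯ ∘ g_ω`. -/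
def giter {Ω Ξ : Type*} (θ : Ω → Ω) (g : Ω → Ξ → Ξ) : ℕ → Ω → Ξ → Ξ
  | 0 => fun _ ξ => ξ
  | n + 1 => fun ω ξ => g (θ^[n] ω) (giter θ g n ω ξ)

/-!
(⇒) The closure of the forward orbit `⋃ₙ (θ ⋉ g)ⁿ(U)` is a forward invariant random closed set
whose interior contains `U`, so by transitivity it is a.e. all of `Ξ`, and the orbit meets `V`.
As `infDist ξ ∅ = 0`, the measurability hypothesis on `U` says nothing over the (possibly
non-measurable) set where `U ω = Ξ`. Off that set `U` agrees with the points at positive distance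
from `Uᶜ`, whose orbit has measurable distance functions. If that set has positive outer measure,
transitivity applied to a random closed set with fibres `Ξ` or `∅` shows that a.e. `ω` has
`U (θ⁻ᵏ ω) = Ξ` for some `k`, and then `(θ ⋉ g)ᵏ(U)` is `Ξ` over `ω`.

(⇐) If a forward invariant random closed set `L` is neither a.e. `Ξ` nor a.e. nowhere dense,
(T1) for `U = int L` and `V = Lᶜ` contradicts `(θ ⋉ g)ⁿ(L) ⊆ L`.
-/

open Function TopologicalSpace

section Measurability

variable {Ω X Y : Type*} [MeasurableSpace Ω]

lemma exists_measure_pos_of_ae_imp_exists {μ : Measure Ω} {q : Ω → Prop} {p : ℕ → Ω → Prop}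
    (h : ∀ᵐ ω ∂μ, q ω → ∃ n, p n ω) (hq : 0 < μ {ω | q ω}) : ∃ n, 0 < μ {ω | p n ω} := by
  by_contra! hp
  refine hq.ne' (measure_mono_null (fun ω hω => ?_) (measure_union_null (ae_iff.1 h)
    (measure_iUnion_null fun n => nonpos_iff_eq_zero.1 (hp n))))
  by_cases hω' : ∃ n, p n ω
  · obtain ⟨n, hn⟩ := hω'
    exact Or.inr (Set.mem_iUnion.2 ⟨n, hn⟩)
  · exact Or.inl fun hpq => hω' (hpq hω)

open Classical in
lemma infEDist_image_eq_iInf_denseSeq [TopologicalSpace X] [SeparableSpace X] [Nonempty X]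
    [PseudoEMetricSpace Y] {O : Set X} (hO : IsOpen O) {F : X → Y} (hF : Continuous F) (y : Y) :
    infEDist y (F '' O) = ⨅ n, if denseSeq X n ∈ O then edist y (F (denseSeq X n)) else ⊤ := by
  have hsub : F '' O ⊆ closure (F '' (O ∩ Set.range (denseSeq X))) :=
    (Set.image_mono ((denseRange_denseSeq X).open_subset_closure_inter hO)).trans
      (image_closure_subset_closure_image hF)
  have hdense : infEDist y (F '' O) = infEDist y (F '' (O ∩ Set.range (denseSeq X))) :=
    le_antisymm (infEDist_anti (Set.image_mono Set.inter_subset_left))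
      (infEDist_closure (x := y) ▸ infEDist_anti hsub)
  rw [hdense, Set.inter_comm, ← Set.image_preimage_eq_range_inter, Set.image_image, infEDist,
    iInf_image]
  simp only [Set.mem_preimage, iInf_eq_if]

lemma measurable_infEDist_image [TopologicalSpace X] [SeparableSpace X] [PseudoEMetricSpace Y]
    {O : Ω → Set X} (hO : ∀ ω, IsOpen (O ω)) (hOm : ∀ x, MeasurableSet {ω | x ∈ O ω})
    {F : Ω → X → Y} (hFc : ∀ ω, Continuous (F ω)) {y : Y}
    (hFm : ∀ x, Measurable fun ω => edist y (F ω x)) :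
    Measurable fun ω => infEDist y (F ω '' O ω) := by
  rcases isEmpty_or_nonempty X with hX | hX
  · simp only [Set.eq_empty_of_isEmpty, Set.image_empty, infEDist_empty]
    exact measurable_const
  classical
  simp_rw [infEDist_image_eq_iInf_denseSeq (hO _) (hFc _)]
  exact Measurable.iInf fun n => Measurable.ite (hOm _) (hFm _) measurable_const

/-- `Kᶜ` when `K` is closed and nonempty, but `∅` when `K = ∅` (as `infDist ξ ∅ = 0`); unlike `Kᶜ`,
membership in it is measurable in the parameter of a random closed set. -/
def posDistSet [PseudoMetricSpace X] (K : Set X) : Set X := {x | 0 < infDist x K}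

variable [PseudoMetricSpace X]

lemma isOpen_posDistSet (K : Set X) : IsOpen (posDistSet K) :=
  isOpen_lt continuous_const (continuous_infDist_pt K)

lemma posDistSet_subset_compl (K : Set X) : posDistSet K ⊆ Kᶜ :=
  fun _ hx hK => (ne_of_gt hx) (infDist_zero_of_mem hK)

lemma posDistSet_eq_compl {K : Set X} (hK : IsClosed K) (hne : K.Nonempty) :
    posDistSet K = Kᶜ :=
  Set.ext fun _ => (hK.notMem_iff_infDist_pos hne).symm

lemma infDist_posDistSet {K : Set X} (hK : IsClosed K) (x : X) :
    infDist x (posDistSet K) = infDist x Kᶜ := by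
  rcases K.eq_empty_or_nonempty with rfl | hne
  · have hempty : posDistSet (∅ : Set X) = ∅ := by simp [posDistSet, infDist_empty]
    rw [hempty, infDist_empty, Set.compl_empty, infDist_zero_of_mem (Set.mem_univ x)]
  · rw [posDistSet_eq_compl hK hne]

lemma measurableSet_mem_posDistSet {K : Ω → Set X} {x : X}
    (hK : Measurable fun ω => infDist x (K ω)) : MeasurableSet {ω | x ∈ posDistSet (K ω)} :=
  measurableSet_lt measurable_const hK

lemma measurable_infDist_compl [SeparableSpace X] {K : Ω → Set X} (hK : ∀ ω, IsClosed (K ω))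
    (hKm : ∀ x, Measurable fun ω => infDist x (K ω)) (x : X) :
    Measurable fun ω => infDist x (K ω)ᶜ := by
  simp_rw [← infDist_posDistSet (hK _)]
  have h := measurable_infEDist_image (fun ω => isOpen_posDistSet (K ω))
    (fun x => measurableSet_mem_posDistSet (hKm x)) (fun _ => continuous_id)
    (fun _ => measurable_const (a := edist x _))
  simp only [Set.image_id] at h
  exact h.ennreal_toReal

end Measurability

section SkewProduct

variable {Ω Ξ : Type*} {θ θinv : Ω → Ω} {g : Ω → Ξ → Ξ}

/-- The fibre over `ω` of `(θ ⋉ g)ⁿ(U)`. -/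
def skewImage (θ θinv : Ω → Ω) (g : Ω → Ξ → Ξ) (n : ℕ) (U : Ω → Set Ξ) (ω : Ω) : Set Ξ :=
  giter θ g n (θinv^[n] ω) '' U (θinv^[n] ω)

lemma skewImage_zero (U : Ω → Set Ξ) : skewImage θ θinv g 0 U = U :=
  funext fun _ => Set.image_id' _

lemma image_skewImage (hli : LeftInverse θinv θ) (hri : RightInverse θinv θ) (n : ℕ)
    (U : Ω → Set Ξ) (ω : Ω) :
    g ω '' skewImage θ θinv g n U ω = skewImage θ θinv g (n + 1) U (θ ω) := by
  have hinv : θinv^[n + 1] (θ ω) = θinv^[n] ω := by rw [iterate_succ_apply, hli]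
  have hgiter : g ω ∘ giter θ g n (θinv^[n] ω) = giter θ g (n + 1) (θinv^[n] ω) := by
    funext ξ
    simp only [comp_apply, giter, (hri.iterate n) ω]
  rw [skewImage, skewImage, hinv, ← Set.image_comp, hgiter]

lemma continuous_giter [TopologicalSpace Ξ] (hgc : ∀ ω, Continuous (g ω)) :
    ∀ n ω, Continuous (giter θ g n ω)
  | 0, _ => continuous_id
  | n + 1, ω => (hgc _).comp (continuous_giter hgc n ω)

lemma surjective_giter (hgs : ∀ ω, Surjective (g ω)) : ∀ n ω, Surjective (giter θ g n ω)
  | 0, _ => surjective_id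
  | n + 1, ω => (hgs _).comp (surjective_giter hgs n ω)

lemma measurable_giter [MeasurableSpace Ω] [MetricSpace Ξ] [SeparableSpace Ξ] [MeasurableSpace Ξ]
    [BorelSpace Ξ] (hθm : Measurable θ) (hgc : ∀ ω, Continuous (g ω))
    (hgm : ∀ ξ, Measurable fun ω => g ω ξ) (n : ℕ) (ξ : Ξ) :
    Measurable fun ω => giter θ g n ω ξ := by
  induction n with
  | zero => exact measurable_const
  | succ n ih =>
    exact (measurable_uncurry_of_continuous_of_measurable hgc hgm).comp
      (ih.prodMk (hθm.iterate n))

lemma ae_skewImage_subset [MeasurableSpace Ω] {P : Measure Ω}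
    (hθinv : Measure.QuasiMeasurePreserving θinv P P) (hli : LeftInverse θinv θ)
    (hri : RightInverse θinv θ) {L : Ω → Set Ξ} (hL : ∀ᵐ ω ∂P, g ω '' L ω ⊆ L (θ ω)) :
    ∀ n, ∀ᵐ ω ∂P, skewImage θ θinv g n L ω ⊆ L ω
  | 0 => .of_forall fun ω => (congrFun (skewImage_zero L) ω).le
  | n + 1 => by
    have hshift : ∀ᵐ ω ∂P, skewImage θ θinv g (n + 1) L (θ ω) ⊆ L (θ ω) := by
      filter_upwards [ae_skewImage_subset hθinv hli hri hL n, hL] with ω hn hω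
      rw [← image_skewImage hli hri]
      exact (Set.image_mono hn).trans hω
    filter_upwards [hθinv.ae hshift] with ω hω
    rwa [hri ω] at hω

lemma measurable_infDist_closure_iUnion_skewImage [MeasurableSpace Ω] [MetricSpace Ξ]
    [SeparableSpace Ξ] [MeasurableSpace Ξ] [BorelSpace Ξ] (hθm : Measurable θ)
    (hθim : Measurable θinv) (hgc : ∀ ω, Continuous (g ω)) (hgm : ∀ ξ, Measurable fun ω => g ω ξ)
    {O : Ω → Set Ξ} (hO : ∀ ω, IsOpen (O ω)) (hOm : ∀ ξ, MeasurableSet {ω | ξ ∈ O ω}) (ξ : Ξ) :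
    Measurable fun ω => infDist ξ (closure (⋃ n, skewImage θ θinv g n O ω)) := by
  simp_rw [infDist_closure]
  refine Measurable.ennreal_toReal ?_
  simp_rw [infEDist_iUnion]
  refine Measurable.iInf fun n => measurable_infEDist_image (fun ω => hO _)
    (fun η => hθim.iterate n (hOm η)) (fun ω => continuous_giter hgc n _) fun η => ?_
  exact measurable_const.edist ((measurable_giter hθm hgc hgm n η).comp (hθim.iterate n))

end SkewProduct

section Transitivity

variable {Ω Ξ : Type*} [MeasurableSpace Ω] [MetricSpace Ξ]

def IsTransitive (P : Measure Ω) (θ : Ω → Ω) (g : Ω → Ξ → Ξ) : Prop :=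
  ∀ L : Ω → Set Ξ, (∀ ω, IsClosed (L ω)) → (∀ ξ, Measurable fun ω => infDist ξ (L ω)) →
    (∀ᵐ ω ∂P, g ω '' L ω ⊆ L (θ ω)) →
    (∀ᵐ ω ∂P, L ω = Set.univ) ∨ (∀ᵐ ω ∂P, IsNowhereDense (L ω))

def SatisfiesT1 (P : Measure Ω) (θ θinv : Ω → Ω) (g : Ω → Ξ → Ξ) : Prop :=
  ∀ U V : Ω → Set Ξ,
    (∀ ω, IsOpen (U ω)) → (∀ ξ, Measurable fun ω => infDist ξ (U ω)ᶜ) →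
    (∀ ω, IsOpen (V ω)) → (∀ ξ, Measurable fun ω => infDist ξ (V ω)ᶜ) →
    0 < P {ω | (U ω).Nonempty} → 0 < P {ω | (V ω).Nonempty} →
    ∃ n : ℕ, 0 < P {ω | (skewImage θ θinv g n U ω ∩ V ω).Nonempty}

variable {P : Measure Ω} {θ θinv : Ω → Ω} {g : Ω → Ξ → Ξ}

/-- Transitivity also constrains sets `A` that need not be measurable: the random closed set with
fibre `Ξ` over `A` and `∅` elsewhere has distance functions `0` (recall `infDist ξ ∅ = 0`). -/
lemma IsTransitive.ae_mem_of_subset_preimage [Nonempty Ξ] (h : IsTransitive P θ g) {A : Set Ω}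
    (hA : A ⊆ θ ⁻¹' A) (hpos : 0 < P A) : ∀ᵐ ω ∂P, ω ∈ A := by
  have hdist : ∀ (ξ : Ξ) ω, infDist ξ {_η : Ξ | ω ∈ A} = 0 := fun ξ ω => by
    by_cases hω : ω ∈ A
    · exact infDist_zero_of_mem hω
    · simp only [hω, Set.ofPred_false, infDist_empty]
  rcases h (fun ω => {_η | ω ∈ A}) (fun _ => isClosed_const)
      (fun ξ => by simp only [hdist ξ]; exact measurable_const)
      (.of_forall fun ω => by rintro _ ⟨_, hω, rfl⟩; exact hA hω) with huniv | hnwd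
  · filter_upwards [huniv] with ω hω
    exact Set.eq_univ_iff_forall.1 hω (Classical.arbitrary Ξ)
  · refine absurd (measure_mono_null (fun ω hω hnwd => ?_) (ae_iff.1 hnwd)) hpos.ne'
    simp only [hω, Set.ofPred_true, IsNowhereDense, closure_univ,
      interior_univ, Set.univ_eq_empty_iff, not_isEmpty_of_nonempty] at hnwd

lemma IsTransitive.ae_exists_skewImage_eq_univ [Nonempty Ξ] (h : IsTransitive P θ g)
    (hli : LeftInverse θinv θ) (hgs : ∀ ω, Surjective (g ω)) {U : Ω → Set Ξ}
    (hpos : 0 < P {ω | U ω = Set.univ}) : ∀ᵐ ω ∂P, ∃ n, skewImage θ θinv g n U ω = Set.univ := by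
  have hA : {ω | ∃ n, U (θinv^[n] ω) = Set.univ} ⊆ θ ⁻¹' {ω | ∃ n, U (θinv^[n] ω) = Set.univ} :=
    fun ω ⟨n, hn⟩ => ⟨n + 1, by rwa [iterate_succ_apply, hli]⟩
  filter_upwards [h.ae_mem_of_subset_preimage hA
    (hpos.trans_le (measure_mono fun ω hω => ⟨0, hω⟩))] with ω ⟨n, hn⟩
  refine ⟨n, ?_⟩
  simp only [skewImage, hn, Set.image_univ, (surjective_giter hgs n _).range_eq]

lemma IsTransitive.ae_dense_iUnion_skewImage [SeparableSpace Ξ] [MeasurableSpace Ξ] [BorelSpace Ξ]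
    (h : IsTransitive P θ g) (hθm : Measurable θ) (hθim : Measurable θinv)
    (hli : LeftInverse θinv θ) (hri : RightInverse θinv θ) (hgc : ∀ ω, Continuous (g ω))
    (hgm : ∀ ξ, Measurable fun ω => g ω ξ) {O : Ω → Set Ξ} (hO : ∀ ω, IsOpen (O ω))
    (hOm : ∀ ξ, MeasurableSet {ω | ξ ∈ O ω}) (hpos : 0 < P {ω | (O ω).Nonempty}) :
    ∀ᵐ ω ∂P, Dense (⋃ n, skewImage θ θinv g n O ω) := by
  set L : Ω → Set Ξ := fun ω => closure (⋃ n, skewImage θ θinv g n O ω)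
  have hinv : ∀ ω, g ω '' L ω ⊆ L (θ ω) := fun ω => by
    refine (image_closure_subset_closure_image (hgc ω)).trans (closure_mono ?_)
    rw [Set.image_iUnion]
    exact Set.iUnion_subset fun n => image_skewImage hli hri n O ω ▸ Set.subset_iUnion_of_subset _
      subset_rfl
  have hOL : ∀ ω, O ω ⊆ interior (L ω) := fun ω =>
    interior_maximal (((congrFun (skewImage_zero O) ω).ge.trans
      (Set.subset_iUnion (fun n => skewImage θ θinv g n O ω) 0)).trans subset_closure) (hO ω)
  rcases h L (fun _ => isClosed_closure)
      (measurable_infDist_closure_iUnion_skewImage hθm hθim hgc hgm hO hOm)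
      (.of_forall hinv) with huniv | hnwd
  · filter_upwards [huniv] with ω hω
    exact dense_iff_closure_eq.2 hω
  · refine absurd (measure_mono_null (fun ω hω hnwd => ?_) (ae_iff.1 hnwd)) hpos.ne'
    rw [isClosed_closure.isNowhereDense_iff] at hnwd
    exact Set.not_nonempty_empty (hnwd ▸ hω.mono (hOL ω))

theorem IsTransitive.satisfiesT1 [SeparableSpace Ξ] [MeasurableSpace Ξ] [BorelSpace Ξ]
    (h : IsTransitive P θ g) (hθm : Measurable θ) (hθim : Measurable θinv)
    (hli : LeftInverse θinv θ) (hri : RightInverse θinv θ) (hgc : ∀ ω, Continuous (g ω))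
    (hgs : ∀ ω, Surjective (g ω)) (hgm : ∀ ξ, Measurable fun ω => g ω ξ) :
    SatisfiesT1 P θ θinv g := by
  intro U V hU hUm hV _ hUpos hVpos
  have : Nonempty Ξ := by
    obtain ⟨_, ξ, -⟩ := nonempty_of_measure_ne_zero hUpos.ne'
    exact ⟨ξ⟩
  have hsplit : {ω | (U ω).Nonempty} ⊆
      {ω | (posDistSet (U ω)ᶜ).Nonempty} ∪ {ω | U ω = Set.univ} := by
    intro ω hω
    by_cases huniv : U ω = Set.univ
    · exact Or.inr huniv
    · refine Or.inl ?_
      rwa [Set.mem_ofPred_eq, posDistSet_eq_compl (hU ω).isClosed_compl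
        (Set.nonempty_compl.2 huniv), compl_compl]
  obtain hpos | hpos : 0 < P {ω | (posDistSet (U ω)ᶜ).Nonempty} ∨ 0 < P {ω | U ω = Set.univ} := by
    by_contra! h0
    exact hUpos.ne' (measure_mono_null hsplit
      (measure_union_null (nonpos_iff_eq_zero.1 h0.1) (nonpos_iff_eq_zero.1 h0.2)))
  · refine exists_measure_pos_of_ae_imp_exists ?_ hVpos
    filter_upwards [h.ae_dense_iUnion_skewImage hθm hθim hli hri hgc hgm
      (fun ω => isOpen_posDistSet _) (fun ξ => measurableSet_mem_posDistSet (hUm ξ)) hpos]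
      with ω hdense hVω
    obtain ⟨ξ, hξV, hξ⟩ := hdense.inter_open_nonempty _ (hV ω) hVω
    obtain ⟨n, hn⟩ := Set.mem_iUnion.1 hξ
    refine ⟨n, ξ, Set.image_mono ?_ hn, hξV⟩
    simpa only [compl_compl] using posDistSet_subset_compl (U _)ᶜ
  · refine exists_measure_pos_of_ae_imp_exists ?_ hVpos
    filter_upwards [h.ae_exists_skewImage_eq_univ hli hgs hpos] with ω ⟨n, hn⟩ ⟨ξ, hξ⟩
    exact ⟨n, ξ, hn ▸ Set.mem_univ ξ, hξ⟩

theorem SatisfiesT1.isTransitive [SeparableSpace Ξ] (h : SatisfiesT1 P θ θinv g)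
    (hθinv : Measure.QuasiMeasurePreserving θinv P P) (hli : LeftInverse θinv θ)
    (hri : RightInverse θinv θ) : IsTransitive P θ g := by
  intro L hL hLm hLinv
  refine or_iff_not_imp_left.2 fun hnuniv => ae_iff.2 ?_
  by_contra hpos
  have hUpos : 0 < P {ω | (interior (L ω)).Nonempty} := by
    refine pos_iff_ne_zero.2 fun h0 => hpos (measure_mono_null (fun ω hω => ?_) h0)
    rw [Set.mem_ofPred_eq, (hL ω).isNowhereDense_iff] at hω
    exact Set.nonempty_iff_ne_empty.2 hω
  have hVpos : 0 < P {ω | (L ω)ᶜ.Nonempty} := by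
    simp only [Set.nonempty_compl]
    exact pos_iff_ne_zero.2 fun h0 => hnuniv (ae_iff.2 h0)
  obtain ⟨n, hn⟩ := h (fun ω => interior (L ω)) (fun ω => (L ω)ᶜ) (fun _ => isOpen_interior)
    (fun ξ => by simpa only [← closure_compl, infDist_closure] using
      measurable_infDist_compl hL hLm ξ)
    (fun ω => (hL ω).isOpen_compl) (fun ξ => by simpa only [compl_compl] using hLm ξ)
    hUpos hVpos
  refine hn.ne' (measure_mono_null ?_ (ae_iff.1 (ae_skewImage_subset hθinv hli hri hLinv n)))
  rintro ω ⟨ξ, hξ, hξL⟩ hsub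
  exact hξL (hsub (Set.image_mono interior_subset hξ))

end Transitivity

theorem stmt18_general {Ω Ξ : Type*} [MeasurableSpace Ω] [MetricSpace Ξ] [CompactSpace Ξ]
    [MeasurableSpace Ξ] [BorelSpace Ξ]
    (P : Measure Ω)
    (θ θinv : Ω → Ω) (hθm : Measurable θ) (hθim : Measurable θinv)
    (hli : Function.LeftInverse θinv θ) (hri : Function.RightInverse θinv θ)
    (herg : Ergodic θ P)
    (g : Ω → Ξ → Ξ) (hgc : ∀ ω, Continuous (g ω))
    (hgb : ∀ ω, Function.Bijective (g ω))
    (hgm : ∀ ξ, Measurable fun ω => g ω ξ) :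
    (∀ L : Ω → Set Ξ, (∀ ω, IsClosed (L ω)) →
        (∀ ξ, Measurable fun ω => infDist ξ (L ω)) →
        (∀ᵐ ω ∂P, g ω '' L ω ⊆ L (θ ω)) →
        ((∀ᵐ ω ∂P, L ω = Set.univ) ∨ (∀ᵐ ω ∂P, IsNowhereDense (L ω)))) ↔
      (∀ U V : Ω → Set Ξ,
        (∀ ω, IsOpen (U ω)) → (∀ ξ, Measurable fun ω => infDist ξ (U ω)ᶜ) →
        (∀ ω, IsOpen (V ω)) → (∀ ξ, Measurable fun ω => infDist ξ (V ω)ᶜ) →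
        0 < P {ω | (U ω).Nonempty} → 0 < P {ω | (V ω).Nonempty} →
        ∃ n : ℕ, 0 < P {ω |
          (giter θ g n (θinv^[n] ω) '' U (θinv^[n] ω) ∩ V ω).Nonempty}) := by
  have hθinv : MeasurePreserving θinv P P :=
    MeasurePreserving.symm (⟨⟨θ, θinv, hli, hri⟩, hθm, hθim⟩ : Ω ≃ᵐ Ω) herg.toMeasurePreserving
  exact ⟨fun h => IsTransitive.satisfiesT1 h hθm hθim hli hri hgc (fun ω => (hgb ω).2) hgm,
    fun h => SatisfiesT1.isTransitive h hθinv.quasiMeasurePreserving hli hri⟩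

/-- A random homeomorphism `θ ⋉ g` on `Ω × Ξ` is transitive if and
only if (T1) holds: for all non-empty random open sets `U, V ⊆ Ω × Ξ` there is
`n ∈ ℕ` such that `(θ ⋉ g)^n(U) ∩ V` is non-empty, where the fibres of
`(θ ⋉ g)^n(U)` are `g^n_{θ^{-n}ω}(U(θ^{-n}ω))` and a random set is non-empty if its
fibre is non-empty on a set of positive `P`-measure. -/
theorem stmt18 {Ω Ξ : Type*} [MeasurableSpace Ω] [MetricSpace Ξ] [CompactSpace Ξ]
    [MeasurableSpace Ξ] [BorelSpace Ξ]
    (P : Measure Ω) [IsProbabilityMeasure P]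
    (θ θinv : Ω → Ω) (hθm : Measurable θ) (hθim : Measurable θinv)
    (hli : Function.LeftInverse θinv θ) (hri : Function.RightInverse θinv θ)
    (herg : Ergodic θ P)
    (g : Ω → Ξ → Ξ) (hgc : ∀ ω, Continuous (g ω))
    (hgb : ∀ ω, Function.Bijective (g ω))
    (hgm : ∀ ξ, Measurable fun ω => g ω ξ) :
    (∀ L : Ω → Set Ξ, (∀ ω, IsClosed (L ω)) →
        (∀ ξ, Measurable fun ω => infDist ξ (L ω)) →
        (∀ᵐ ω ∂P, g ω '' L ω ⊆ L (θ ω)) →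
        ((∀ᵐ ω ∂P, L ω = Set.univ) ∨ (∀ᵐ ω ∂P, IsNowhereDense (L ω)))) ↔
      (∀ U V : Ω → Set Ξ,
        (∀ ω, IsOpen (U ω)) → (∀ ξ, Measurable fun ω => infDist ξ (U ω)ᶜ) →
        (∀ ω, IsOpen (V ω)) → (∀ ξ, Measurable fun ω => infDist ξ (V ω)ᶜ) →
        0 < P {ω | (U ω).Nonempty} → 0 < P {ω | (V ω).Nonempty} →
        ∃ n : ℕ, 0 < P {ω |
          (giter θ g n (θinv^[n] ω) '' U (θinv^[n] ω) ∩ V ω).Nonempty}) :=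
  stmt18_general P θ θinv hθm hθim hli hri herg g hgc hgb hgm
end
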